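/- arXiv:1508.01813 — 5 statements merged into one kernel-verified Lean document; each statement's English description precedes it below -/
import Mathlib

section
/- Any path d₁, t₁, …, t_p, d₂ with d₁, d₂ distinct depots, t₁,…,t_p targets and p ≥ 3, viewed as its incidence vector (x,y) with x_e the number of times edge e is used and y_v = 1 iff target v is visited, violates the path elimination inequality x(D':{j}) + 2·x(γ(S∪{j,k})) + x({k}:D∖D') ≤ Σ_{v∈S} 2y_v + 2(y_j + y_k) − y_i with the choices D' = {d₁}, j = t₁, k = t_p, S = {t₂,…,t_{p−1}}, and i = t_r for any 2 ≤ r ≤ p−1. -/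
open Finset

/-- The incidence vector `(x, y)` of a path
`d₁, t₁, …, t_p, d₂` with `d₁ ≠ d₂` depots, distinct targets `t₁, …, t_p` and
`p ≥ 3` violates the path elimination inequality
`x(D':{j}) + 2·x(γ(S∪{j,k})) + x({k}:D∖D') ≤ Σ_{v∈S} 2y_v + 2(y_j+y_k) − y_i`
with `D' = {d₁}`, `j = t₁`, `k = t_p`, `S = {t₂,…,t_{p−1}}` and `i = t_r` for
any `2 ≤ r ≤ p−1`.  (Indices are `0`-based below: `t ⟨0⟩ = t₁`,
`t ⟨p-1⟩ = t_p`, and `i = t ⟨r⟩` with `1 ≤ r ≤ p−2`.)  Note that the double sum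
over `S̄ × S̄` counts every edge of `γ(S̄)` exactly twice, i.e. it equals
`2·x(γ(S∪{j,k}))`. -/
theorem path_violates_pec {T D : Type*} [Fintype T] [DecidableEq T]
    [Fintype D] [DecidableEq D]
    (p : ℕ) (hp : 3 ≤ p) (d₁ d₂ : D) (hd : d₁ ≠ d₂)
    (t : Fin p → T) (ht : Function.Injective t)
    (x : (T ⊕ D) → (T ⊕ D) → ℕ) (y : T → ℕ)
    (isEdge : (T ⊕ D) → (T ⊕ D) → Prop)
    (hEdge : ∀ u v, isEdge u v ↔
      ((u = Sum.inr d₁ ∧ v = Sum.inl (t ⟨0, by omega⟩)) ∨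
       (v = Sum.inr d₁ ∧ u = Sum.inl (t ⟨0, by omega⟩)) ∨
       (∃ i : ℕ, ∃ h : i + 1 < p,
          (u = Sum.inl (t ⟨i, by omega⟩) ∧ v = Sum.inl (t ⟨i + 1, h⟩)) ∨
          (v = Sum.inl (t ⟨i, by omega⟩) ∧ u = Sum.inl (t ⟨i + 1, h⟩))) ∨
       (u = Sum.inl (t ⟨p - 1, by omega⟩) ∧ v = Sum.inr d₂) ∨
       (v = Sum.inl (t ⟨p - 1, by omega⟩) ∧ u = Sum.inr d₂)))
    (hx1 : ∀ u v, isEdge u v → x u v = 1)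
    (hx0 : ∀ u v, ¬ isEdge u v → x u v = 0)
    (hy : ∀ v : T, y v = if ∃ i, t i = v then 1 else 0)
    (r : ℕ) (hr1 : 1 ≤ r) (hr2 : r ≤ p - 2) :
    (∑ v ∈ (((Finset.univ.image t).erase (t ⟨0, by omega⟩)).erase
        (t ⟨p - 1, by omega⟩)), 2 * (y v : ℤ)) +
      2 * ((y (t ⟨0, by omega⟩) : ℤ) + (y (t ⟨p - 1, by omega⟩) : ℤ)) -
      (y (t ⟨r, by omega⟩) : ℤ) <
    (x (Sum.inr d₁) (Sum.inl (t ⟨0, by omega⟩)) : ℤ) +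
      (∑ a ∈ Finset.univ.image t, ∑ b ∈ Finset.univ.image t,
        (x (Sum.inl a) (Sum.inl b) : ℤ)) +
      ∑ d ∈ ({d₁}ᶜ : Finset D), (x (Sum.inl (t ⟨p - 1, by omega⟩)) (Sum.inr d) : ℤ) := by
  have hyv : ∀ i : Fin p, (y (t i) : ℤ) = 1 := by
    intro i
    have hex : ∃ j, t j = t i := ⟨i, rfl⟩
    rw [hy, if_pos hex]
    norm_num
  have hxij : ∀ i j : Fin p, (x (Sum.inl (t i)) (Sum.inl (t j)) : ℤ) =
      (if i.1 + 1 = j.1 then 1 else 0) + (if j.1 + 1 = i.1 then 1 else 0) := by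
    intro i j
    by_cases h1 : i.1 + 1 = j.1
    · have hedge : isEdge (Sum.inl (t i)) (Sum.inl (t j)) := by
        rw [hEdge]
        exact Or.inr (Or.inr (Or.inl ⟨i.1, by omega,
          Or.inl ⟨rfl, congrArg (fun k => Sum.inl (t k)) (Fin.ext h1.symm)⟩⟩))
      rw [hx1 _ _ hedge]
      have h2 : ¬ (j.1 + 1 = i.1) := by omega
      simp [h1, h2]
    · by_cases h2 : j.1 + 1 = i.1
      · have hedge : isEdge (Sum.inl (t i)) (Sum.inl (t j)) := by
          rw [hEdge]
          exact Or.inr (Or.inr (Or.inl ⟨j.1, by omega,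
            Or.inr ⟨rfl, congrArg (fun k => Sum.inl (t k)) (Fin.ext h2.symm)⟩⟩))
        rw [hx1 _ _ hedge]
        simp [h1, h2]
      · have hnedge : ¬ isEdge (Sum.inl (t i)) (Sum.inl (t j)) := by
          rw [hEdge]
          rintro (⟨h, -⟩ | ⟨h, -⟩ | ⟨m, hm, ⟨ha, hb⟩ | ⟨ha, hb⟩⟩ | ⟨-, h⟩ | ⟨-, h⟩)
          · exact absurd h (by simp)
          · exact absurd h (by simp)
          · have hi : i = ⟨m, by omega⟩ := ht (Sum.inl.inj ha)
            have hj : j = ⟨m + 1, hm⟩ := ht (Sum.inl.inj hb)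
            apply h1; rw [hi, hj]
          · have hj : j = ⟨m, by omega⟩ := ht (Sum.inl.inj ha)
            have hi : i = ⟨m + 1, hm⟩ := ht (Sum.inl.inj hb)
            apply h2; rw [hi, hj]
          · exact absurd h (by simp)
          · exact absurd h (by simp)
        rw [hx0 _ _ hnedge]
        simp [h1, h2]
  have hdouble : (∑ a ∈ Finset.univ.image t, ∑ b ∈ Finset.univ.image t,
      (x (Sum.inl a) (Sum.inl b) : ℤ)) = 2 * (p - 1 : ℤ) := by
    rw [Finset.sum_image (fun a _ b _ h => ht h)]
    have hh : ∀ i : Fin p, ∑ b ∈ Finset.univ.image t, (x (Sum.inl (t i)) (Sum.inl b) : ℤ)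
        = ∑ j : Fin p, (x (Sum.inl (t i)) (Sum.inl (t j)) : ℤ) := by
      intro i; rw [Finset.sum_image (fun a _ b _ h => ht h)]
    rw [Finset.sum_congr rfl (fun i _ => hh i)]
    calc (∑ i : Fin p, ∑ j : Fin p, (x (Sum.inl (t i)) (Sum.inl (t j)) : ℤ))
        = ∑ i : Fin p, ∑ j : Fin p,
            ((if i.1 + 1 = j.1 then (1:ℤ) else 0) + (if j.1 + 1 = i.1 then 1 else 0)) :=
          Finset.sum_congr rfl fun i _ => Finset.sum_congr rfl fun j _ => hxij i j
      _ = ∑ i ∈ Finset.range p, ∑ j ∈ Finset.range p,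
            ((if i + 1 = j then (1:ℤ) else 0) + (if j + 1 = i then 1 else 0)) := by
          rw [← Fin.sum_univ_eq_sum_range]
          refine Finset.sum_congr rfl fun i _ => ?_
          rw [← Fin.sum_univ_eq_sum_range]
      _ = 2 * (p - 1 : ℤ) := by
          have h1 : ∀ i ∈ Finset.range p, ∑ j ∈ Finset.range p,
              ((if i + 1 = j then (1:ℤ) else 0) + (if j + 1 = i then 1 else 0)) =
              (if i + 1 < p then (1:ℤ) else 0) + (if 1 ≤ i then 1 else 0) := by
            intro i hi
            rw [Finset.mem_range] at hi
            rw [Finset.sum_add_distrib]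
            congr 1
            · rw [Finset.sum_ite_eq (Finset.range p) (i+1) (fun _ => (1:ℤ))]
              simp [Finset.mem_range]
            · by_cases hi1 : 1 ≤ i
              · rw [if_pos hi1, Finset.sum_eq_single (i-1)]
                · rw [if_pos (by omega)]
                · intro j _ hne
                  exact if_neg (by omega)
                · intro hcon
                  exact absurd (Finset.mem_range.2 (by omega)) hcon
              · rw [if_neg hi1]
                exact Finset.sum_eq_zero fun j _ => if_neg (by omega)
          rw [Finset.sum_congr rfl h1, Finset.sum_add_distrib]
          have e1 : ∑ i ∈ Finset.range p, (if i + 1 < p then (1:ℤ) else 0) = (p - 1 : ℤ) := by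
            rw [← Finset.sum_filter]
            have hf : Finset.filter (fun i => i + 1 < p) (Finset.range p)
                = Finset.range (p - 1) := by
              ext j; simp only [Finset.mem_filter, Finset.mem_range]; omega
            rw [hf, Finset.sum_const, Finset.card_range, nsmul_eq_mul]
            have : ((p - 1 : ℕ) : ℤ) = (p : ℤ) - 1 := by omega
            rw [this]; ring
          have e2 : ∑ i ∈ Finset.range p, (if 1 ≤ i then (1:ℤ) else 0) = (p - 1 : ℤ) := by
            rw [← Finset.sum_filter]
            have hf : Finset.filter (fun i => 1 ≤ i) (Finset.range p)
                = (Finset.range p).erase 0 := by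
              ext j; simp only [Finset.mem_filter, Finset.mem_range, Finset.mem_erase]; omega
            rw [hf, Finset.sum_const,
              Finset.card_erase_of_mem (Finset.mem_range.2 (by omega)),
              Finset.card_range, nsmul_eq_mul]
            have : ((p - 1 : ℕ) : ℤ) = (p : ℤ) - 1 := by omega
            rw [this]; ring
          rw [e1, e2]; ring
  have hx_d1 : (x (Sum.inr d₁) (Sum.inl (t ⟨0, by omega⟩)) : ℤ) = 1 := by
    rw [hx1 _ _ (by rw [hEdge]; exact Or.inl ⟨rfl, rfl⟩)]; norm_num
  have hx_d2 : ∑ d ∈ ({d₁}ᶜ : Finset D),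
      (x (Sum.inl (t ⟨p - 1, by omega⟩)) (Sum.inr d) : ℤ) = 1 := by
    have hterm : ∀ d : D, (x (Sum.inl (t ⟨p - 1, by omega⟩)) (Sum.inr d) : ℤ) =
        if d₂ = d then 1 else 0 := by
      intro d
      by_cases hdd : d₂ = d
      · subst hdd
        rw [hx1 _ _ (by rw [hEdge]; exact Or.inr (Or.inr (Or.inr (Or.inl ⟨rfl, rfl⟩))))]
        simp
      · have hne : ¬ isEdge (Sum.inl (t ⟨p - 1, by omega⟩)) (Sum.inr d) := by
          rw [hEdge]
          rintro (⟨h, -⟩ | ⟨-, h⟩ | ⟨m, hm, ⟨-, h⟩ | ⟨h, -⟩⟩ | ⟨-, h⟩ | ⟨h, -⟩)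
          · exact absurd h (by simp)
          · have := ht (Sum.inl.inj h)
            simp only [Fin.mk.injEq] at this
            omega
          · exact absurd h (by simp)
          · exact absurd h (by simp)
          · exact hdd (Sum.inr.inj h).symm
          · exact absurd h (by simp)
        rw [hx0 _ _ hne]
        simp [hdd]
    rw [Finset.sum_congr rfl fun d _ => hterm d]
    rw [Finset.sum_ite_eq (({d₁}ᶜ : Finset D)) d₂ (fun _ => (1:ℤ))]
    simp [hd.symm]
  have hS : (∑ v ∈ (((Finset.univ.image t).erase (t ⟨0, by omega⟩)).erase
      (t ⟨p - 1, by omega⟩)), 2 * (y v : ℤ)) = 2 * (p - 2 : ℤ) := by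
    have hsub : (((Finset.univ.image t).erase (t ⟨0, by omega⟩)).erase
        (t ⟨p - 1, by omega⟩)) ⊆ Finset.univ.image t :=
      (Finset.erase_subset _ _).trans (Finset.erase_subset _ _)
    have hone : ∀ v ∈ (((Finset.univ.image t).erase (t ⟨0, by omega⟩)).erase
        (t ⟨p - 1, by omega⟩)), 2 * (y v : ℤ) = 2 := by
      intro v hv
      obtain ⟨i, -, rfl⟩ := Finset.mem_image.1 (hsub hv)
      rw [hyv]; ring
    rw [Finset.sum_congr rfl hone, Finset.sum_const, nsmul_eq_mul]
    have hne01 : t ⟨0, by omega⟩ ≠ t ⟨p - 1, by omega⟩ := by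
      intro h
      have := ht h
      simp only [Fin.mk.injEq] at this
      omega
    have hm1 : t ⟨p - 1, by omega⟩ ∈ (Finset.univ.image t).erase (t ⟨0, by omega⟩) :=
      Finset.mem_erase.2 ⟨hne01.symm, Finset.mem_image_of_mem t (Finset.mem_univ _)⟩
    have hm0 : t ⟨0, by omega⟩ ∈ Finset.univ.image t :=
      Finset.mem_image_of_mem t (Finset.mem_univ _)
    rw [Finset.card_erase_of_mem hm1, Finset.card_erase_of_mem hm0,
      Finset.card_image_of_injective _ ht, Finset.card_univ, Fintype.card_fin]
    have : ((p - 1 - 1 : ℕ) : ℤ) = (p : ℤ) - 2 := by omega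
    rw [this]; ring
  rw [hS, hdouble, hx_d1, hx_d2, hyv, hyv, hyv]
  have h3 : (3 : ℤ) ≤ (p : ℤ) := by exact_mod_cast hp
  linarith
end

section
/- In any feasible GMDTSP solution, for all distinct targets j, k ∈ T and any proper nonempty subset D' ⊂ D of depots, the inequality x(D':{j}) + 3·x_{jk} + x({k}:D∖D') ≤ 2(y_j + y_k) holds; in particular no cycle of the solution can contain two distinct depots by passing from a depot in D' through j and k to a depot outside D'. -/
open Finset

/-- A feasible GMDTSP solution: a collection of simple cycles on the complete
target–depot graph (no depot–depot edges), each cycle containing exactly one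
depot, visiting at least one target of every cluster.  `x u v` is the number of
times the edge `{u,v}` is used (2 only on degenerate depot–target two-edge
cycles) and `y t` indicates whether target `t` is visited. -/
structure GMDTSPSol (T D : Type*) [Fintype T] [Fintype D]
    (clusters : Finset (Finset T)) where
  x : (T ⊕ D) → (T ⊕ D) → ℕ
  y : T → ℕ
  symm : ∀ u v, x u v = x v u
  loopless : ∀ u, x u u = 0
  no_depot_depot : ∀ d d' : D, x (Sum.inr d) (Sum.inr d') = 0
  xTT_le_one : ∀ t t' : T, x (Sum.inl t) (Sum.inl t') ≤ 1
  xDT_le_two : ∀ (d : D) (t : T), x (Sum.inr d) (Sum.inl t) ≤ 2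
  y_le_one : ∀ t, y t ≤ 1
  degree : ∀ t : T, ∑ v : T ⊕ D, x (Sum.inl t) v = 2 * y t
  depot_degree : ∀ d : D, ∑ v : T ⊕ D, x (Sum.inr d) v ≤ 2
  connected : ∀ t : T, y t = 1 →
    ∃ d : D, Relation.ReflTransGen (fun u v => 0 < x u v) (Sum.inl t) (Sum.inr d)
  one_depot_per_cycle : ∀ d d' : D, d ≠ d' →
    ¬ Relation.ReflTransGen (fun u v => 0 < x u v) (Sum.inr d) (Sum.inr d')
  covers : ∀ C ∈ clusters, ∃ t ∈ C, y t = 1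

/-- `x(δ(S))`: total multiplicity of solution edges crossing the cut `(S, V∖S)`,
for a set `S` of targets. -/
def cutS {T D : Type*} [Fintype T] [DecidableEq T] [Fintype D]
    {clusters : Finset (Finset T)} (sol : GMDTSPSol T D clusters)
    (S : Finset T) : ℕ :=
  ∑ a ∈ S, ((∑ b ∈ Sᶜ, sol.x (Sum.inl a) (Sum.inl b)) +
    ∑ d : D, sol.x (Sum.inl a) (Sum.inr d))

/-- In any feasible GMDTSP solution, for all distinct targets
`j, k` and any proper nonempty subset `D' ⊂ D` of depots,
`x(D':{j}) + 3·x_{jk} + x({k}:D∖D') ≤ 2(y_j + y_k)`. -/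
theorem pec4_valid {T D : Type*} [Fintype T] [DecidableEq T] [Fintype D]
    [DecidableEq D] (clusters : Finset (Finset T))
    (sol : GMDTSPSol T D clusters)
    (j k : T) (hjk : j ≠ k)
    (D' : Finset D) (hne : D'.Nonempty) (hproper : D' ≠ Finset.univ) :
    (∑ d ∈ D', sol.x (Sum.inr d) (Sum.inl j)) +
        3 * sol.x (Sum.inl j) (Sum.inl k) +
        ∑ d ∈ D'ᶜ, sol.x (Sum.inl k) (Sum.inr d) ≤
      2 * (sol.y j + sol.y k) := by

  set a := ∑ d ∈ D', sol.x (Sum.inr d) (Sum.inl j) with ha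
  set b := sol.x (Sum.inl j) (Sum.inl k) with hb
  set c := ∑ d ∈ D'ᶜ, sol.x (Sum.inl k) (Sum.inr d) with hc
  have degj := sol.degree j
  have degk := sol.degree k
  rw [Fintype.sum_sum_type] at degj degk
  have haj : a + b ≤ 2 * sol.y j := by
    have h1 : a ≤ ∑ d : D, sol.x (Sum.inl j) (Sum.inr d) := by
      rw [ha]
      calc ∑ d ∈ D', sol.x (Sum.inr d) (Sum.inl j)
          = ∑ d ∈ D', sol.x (Sum.inl j) (Sum.inr d) := by
            exact Finset.sum_congr rfl fun d _ => sol.symm _ _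
        _ ≤ ∑ d : D, sol.x (Sum.inl j) (Sum.inr d) :=
            Finset.sum_le_sum_of_subset (Finset.subset_univ _)
    have h2 : b ≤ ∑ t : T, sol.x (Sum.inl j) (Sum.inl t) :=
      Finset.single_le_sum (f := fun t => sol.x (Sum.inl j) (Sum.inl t))
        (fun _ _ => Nat.zero_le _) (Finset.mem_univ k)
    omega
  have hbk : b + c ≤ 2 * sol.y k := by
    have h1 : c ≤ ∑ d : D, sol.x (Sum.inl k) (Sum.inr d) :=
      Finset.sum_le_sum_of_subset (Finset.subset_univ _)
    have h2 : b ≤ ∑ t : T, sol.x (Sum.inl k) (Sum.inl t) := by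
      have := Finset.single_le_sum (f := fun t => sol.x (Sum.inl k) (Sum.inl t))
        (fun _ _ => Nat.zero_le _) (Finset.mem_univ j)
      rw [hb, sol.symm]
      exact this
    omega
  have hb1 : b ≤ 1 := sol.xTT_le_one j k
  have hyj : sol.y j ≤ 1 := sol.y_le_one j
  have hyk : sol.y k ≤ 1 := sol.y_le_one k
  have hac : ¬ (1 ≤ a ∧ 1 ≤ b ∧ 1 ≤ c) := by
    rintro ⟨ha1, hb1', hc1⟩
    obtain ⟨d, hd, hd0⟩ := Finset.exists_ne_zero_of_sum_ne_zero
      (by omega : a ≠ 0)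
    obtain ⟨d', hd', hd0'⟩ := Finset.exists_ne_zero_of_sum_ne_zero
      (by omega : c ≠ 0)
    have hdd : d ≠ d' := by
      intro h; subst h; exact (Finset.mem_compl.mp hd') hd
    apply sol.one_depot_per_cycle d d' hdd
    refine Relation.ReflTransGen.head (Nat.pos_of_ne_zero hd0) ?_
    refine Relation.ReflTransGen.head (show 0 < sol.x (Sum.inl j) (Sum.inl k) by omega) ?_
    exact Relation.ReflTransGen.single (Nat.pos_of_ne_zero hd0')
  omega
end

section
/- The clustering inequality Σ_{i∈C_h} y_i ≥ 1 never defines a facet of the GMDTSP polytope P: using the degree equations it is equivalent to x(δ(C_h)) + 2·x(γ(C_h)) ≥ 2, which is dominated by x(δ(C_h)) ≥ 2 when |C_h| ≥ 2, and reduces to the equation x(δ(C_h)) = 2 (an improper face) when |C_h| = 1. -/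
open Finset

noncomputable section

/-- The incidence vector `(x, y)` of a feasible GMDTSP solution, viewed as a
point of `ℝ^{E} × ℝ^{T}` (edge coordinates stored symmetrically). -/
def incVec {T D : Type*} [Fintype T] [Fintype D] {clusters : Finset (Finset T)}
    (sol : GMDTSPSol T D clusters) : ((T ⊕ D) → (T ⊕ D) → ℝ) × (T → ℝ) :=
  (fun u v => (sol.x u v : ℝ), fun t => (sol.y t : ℝ))

/-- `P(F)`: the convex hull of incidence vectors of feasible GMDTSP solutions
satisfying `y_v = 1` for all `v ∈ F`.  The GMDTSP polytope is `P = P(∅)` and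
the MDTSP polytope is `Q = P(T)`. -/
def PF (T D : Type*) [Fintype T] [Fintype D] (clusters : Finset (Finset T))
    (F : Finset T) : Set (((T ⊕ D) → (T ⊕ D) → ℝ) × (T → ℝ)) :=
  convexHull ℝ
    {p | ∃ sol : GMDTSPSol T D clusters, (∀ v ∈ F, sol.y v = 1) ∧ p = incVec sol}

/-- The dimension of a set: the dimension of its affine hull. -/
def dimOf {T D : Type*} [Fintype T] [Fintype D]
    (s : Set (((T ⊕ D) → (T ⊕ D) → ℝ) × (T → ℝ))) : ℕ :=
  Module.finrank ℝ (affineSpan ℝ s).direction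

/-- The inequality `f p ≥ b` is valid for `P` and defines a facet of `P`. -/
def IsFacetGe {T D : Type*} [Fintype T] [Fintype D]
    (f : ((T ⊕ D) → (T ⊕ D) → ℝ) × (T → ℝ) → ℝ) (b : ℝ)
    (P : Set (((T ⊕ D) → (T ⊕ D) → ℝ) × (T → ℝ))) : Prop :=
  (∀ p ∈ P, b ≤ f p) ∧ dimOf {p ∈ P | f p = b} = dimOf P - 1

/-- The inequality `f p ≤ b` is valid for `P` and defines a facet of `P`. -/
def IsFacetLe {T D : Type*} [Fintype T] [Fintype D]
    (f : ((T ⊕ D) → (T ⊕ D) → ℝ) × (T → ℝ) → ℝ) (b : ℝ)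
    (P : Set (((T ⊕ D) → (T ⊕ D) → ℝ) × (T → ℝ))) : Prop :=
  (∀ p ∈ P, f p ≤ b) ∧ dimOf {p ∈ P | f p = b} = dimOf P - 1

/-!
For distinct targets `i, j` of a cluster `C`, every feasible solution satisfies
`x_ij + 1 ≤ Σ_{t ∈ C} y_t`: if the edge `ij` is used, both of its ends are visited. Hence, when
`|C| ≥ 2`, the face `Σ_{t ∈ C} y_t = 1` also lies in the hyperplane `x_ij = 0`. Three
single-depot tours (through all targets with `ij` an edge, through all targets with `ij` not an
edge, and through all targets but `j`) show that these two equations are independent on the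
affine hull of `P`, so the face has codimension at least two. When `C = {c}`, every solution
visits `c`, so the face is all of `P`, which is not a single point.
-/

open Function Module

lemma ZMod.natCast_ne_zero_of_lt {m a : ℕ} (h0 : 0 < a) (ha : a < m) : (a : ZMod m) ≠ 0 := by
  rw [Ne, ZMod.natCast_eq_zero_iff]
  exact Nat.not_dvd_of_pos_of_lt h0 ha

section CycleMult

variable {V : Type*} [DecidableEq V] {m : ℕ} [NeZero m] {c : ZMod m → V}

/-- The number of times the closed walk `c 0, c 1, …, c (m - 1), c 0` traverses the edge `uv`. -/
def cycleMult (c : ZMod m → V) (u v : V) : ℕ :=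
  #{k | s(c k, c (k + 1)) = s(u, v)}

lemma cycleMult_comm (u v : V) : cycleMult c u v = cycleMult c v u := by
  simp only [cycleMult, Sym2.eq_swap]

lemma mem_range_of_cycleMult_pos {u v : V} (h : 0 < cycleMult c u v) : u ∈ Set.range c := by
  obtain ⟨k, hk⟩ := card_pos.mp h
  rcases Sym2.eq_iff.mp (mem_filter.mp hk).2 with ⟨hu, -⟩ | ⟨-, hu⟩
  exacts [⟨k, hu⟩, ⟨k + 1, hu⟩]

lemma cycleMult_pos_succ (k : ZMod m) : 0 < cycleMult c (c k) (c (k + 1)) :=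
  card_pos.mpr ⟨k, by simp⟩

lemma reflTransGen_cycleMult_pos (j k : ZMod m) :
    Relation.ReflTransGen (fun u v => 0 < cycleMult c u v) (c j) (c k) := by
  have walk (n : ℕ) :
      Relation.ReflTransGen (fun u v => 0 < cycleMult c u v) (c j) (c (j + n)) := by
    induction n with
    | zero => simpa using Relation.ReflTransGen.refl
    | succ n ih => simpa [add_assoc] using ih.tail (cycleMult_pos_succ _)
  simpa using walk (k - j).val

lemma cycleMult_eq_zero_of_notMem_range {u : V} (hu : u ∉ Set.range c) (v : V) :
    cycleMult c u v = 0 :=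
  Nat.eq_zero_of_not_pos fun h => hu (mem_range_of_cycleMult_pos h)

variable (hc : Injective c)
include hc

lemma cycleMult_apply_left (hm : 1 < m) (j : ZMod m) (v : V) :
    cycleMult c (c j) v = (if c (j + 1) = v then 1 else 0) + (if c (j - 1) = v then 1 else 0) := by
  have hj : j - 1 ≠ j := by
    simpa using ZMod.natCast_ne_zero_of_lt (a := 1) one_pos hm
  have hedge : ∀ k, s(c k, c (k + 1)) = s(c j, v) ↔
      (k = j ∧ c (j + 1) = v) ∨ (k = j - 1 ∧ c (j - 1) = v) := by
    intro k
    rw [Sym2.eq_iff, hc.eq_iff, hc.eq_iff, ← eq_sub_iff_add_eq]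
    constructor
    · rintro (⟨rfl, h⟩ | ⟨h, rfl⟩)
      exacts [Or.inl ⟨rfl, h⟩, Or.inr ⟨rfl, h⟩]
    · rintro (⟨rfl, h⟩ | ⟨rfl, h⟩)
      exacts [Or.inl ⟨rfl, h⟩, Or.inr ⟨h, rfl⟩]
  rw [cycleMult, filter_congr fun k _ => hedge k, filter_or, card_union_of_disjoint]
  · congr 1 <;> split_ifs with h <;> simp [h, filter_eq']
  · exact disjoint_filter.mpr fun k _ hj' hj'' => hj (hj''.1.symm.trans hj'.1)

lemma cycleMult_self (hm : 1 < m) (u : V) : cycleMult c u u = 0 := by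
  by_cases hu : u ∈ Set.range c
  · obtain ⟨j, rfl⟩ := hu
    have h1 : (1 : ZMod m) ≠ 0 := by exact_mod_cast ZMod.natCast_ne_zero_of_lt one_pos hm
    rw [cycleMult_apply_left hc hm, if_neg (hc.ne (add_ne_left.mpr h1)),
      if_neg (hc.ne (sub_eq_self.not.mpr h1))]
  · exact cycleMult_eq_zero_of_notMem_range hu u

lemma cycleMult_le_one (hm : 2 < m) (u v : V) : cycleMult c u v ≤ 1 := by
  by_cases hu : u ∈ Set.range c
  · obtain ⟨j, rfl⟩ := hu
    have h2 : (2 : ZMod m) ≠ 0 := by exact_mod_cast ZMod.natCast_ne_zero_of_lt two_pos hm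
    have hne : c (j + 1) ≠ c (j - 1) := by
      rw [hc.ne_iff]
      intro h
      exact h2 (by linear_combination h)
    rw [cycleMult_apply_left hc (by omega)]
    split_ifs with h h' <;> first | omega | exact absurd (h.trans h'.symm) hne
  · simp [cycleMult_eq_zero_of_notMem_range hu]

lemma cycleMult_apply_succ (hm : 2 < m) (j : ZMod m) : cycleMult c (c j) (c (j + 1)) = 1 :=
  le_antisymm (cycleMult_le_one hc hm _ _) (cycleMult_pos_succ j)

lemma cycleMult_apply_eq_zero (hm : 1 < m) {j k : ZMod m} (h₁ : k ≠ j + 1)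
    (h₂ : k ≠ j - 1) :
    cycleMult c (c j) (c k) = 0 := by
  rw [cycleMult_apply_left hc hm, if_neg (hc.ne h₁.symm), if_neg (hc.ne h₂.symm)]

lemma sum_cycleMult [Fintype V] (hm : 1 < m) (u : V) :
    ∑ v, cycleMult c u v = if u ∈ Set.range c then 2 else 0 := by
  split_ifs with hu
  · obtain ⟨j, rfl⟩ := hu
    simp [cycleMult_apply_left hc hm, sum_add_distrib]
  · simp [cycleMult_eq_zero_of_notMem_range hu]

end CycleMult

section Tour

variable {T D : Type*} [Fintype T] [Fintype D] [DecidableEq T] [DecidableEq D]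
  {clusters : Finset (Finset T)} {m : ℕ} [NeZero m]

def tourSol (c : ZMod m → T ⊕ D) (hc : Injective c) (hm : 2 < m) (d : D) (S : Finset T)
    (hrange : Set.range c = insert (Sum.inr d) (Sum.inl '' S))
    (hcov : ∀ C ∈ clusters, ∃ t ∈ C, t ∈ S) : GMDTSPSol T D clusters :=
  have hinl : ∀ t, Sum.inl t ∈ Set.range c ↔ t ∈ S := by simp [hrange]
  have hinr : ∀ d', Sum.inr d' ∈ Set.range c ↔ d' = d := by simp [hrange]
  have hm1 : 1 < m := by omega
  { x := cycleMult c
    y := fun t => if t ∈ S then 1 else 0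
    symm := cycleMult_comm
    loopless := cycleMult_self hc hm1
    no_depot_depot := fun d₁ d₂ => by
      by_contra hpos
      have h₁ := (hinr d₁).mp (mem_range_of_cycleMult_pos (Nat.pos_of_ne_zero hpos))
      rw [cycleMult_comm] at hpos
      have h₂ := (hinr d₂).mp (mem_range_of_cycleMult_pos (Nat.pos_of_ne_zero hpos))
      subst h₁ h₂
      exact hpos (cycleMult_self hc hm1 _)
    xTT_le_one := fun _ _ => cycleMult_le_one hc hm _ _
    xDT_le_two := fun _ _ => (cycleMult_le_one hc hm _ _).trans one_le_two
    y_le_one := fun t => by split_ifs <;> omega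
    degree := fun t => by simp [sum_cycleMult hc hm1, hinl]
    depot_degree := fun d' => by rw [sum_cycleMult hc hm1]; split_ifs <;> omega
    connected := fun t ht => by
      obtain ⟨j, hj⟩ := (hinl t).mpr (by by_contra h; simp [h] at ht)
      obtain ⟨k, hk⟩ := (hinr d).mpr rfl
      exact ⟨d, hj ▸ hk ▸ reflTransGen_cycleMult_pos j k⟩
    one_depot_per_cycle := fun d₁ d₂ hne hpath => by
      have h₁ : d₁ = d := by
        obtain heq | ⟨w, hw, -⟩ := hpath.cases_head
        · exact absurd (Sum.inr_injective heq) hne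
        · exact (hinr d₁).mp (mem_range_of_cycleMult_pos hw)
      have h₂ : d₂ = d := by
        obtain heq | ⟨w, -, hw⟩ := hpath.cases_tail
        · exact absurd (Sum.inr_injective heq).symm hne
        · exact (hinr d₂).mp (mem_range_of_cycleMult_pos (hw.trans_eq (cycleMult_comm _ _)))
      exact hne (h₁.trans h₂.symm)
    covers := fun C hC => by
      obtain ⟨t, htC, htS⟩ := hcov C hC
      exact ⟨t, htC, if_pos htS⟩ }

end Tour

lemma exists_tour {T D : Type*} (d : D) (S : Finset T) :
    ∃ c : ZMod (#S + 1) → T ⊕ D,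
      Injective c ∧ Set.range c = insert (Sum.inr d) (Sum.inl '' S) := by
  let e : ZMod (#S + 1) ≃ Option S := Fintype.equivOfCardEq (by simp)
  let f : Option S → T ⊕ D := fun o => o.elim (Sum.inr d) (fun t => Sum.inl t)
  have hf : Injective f := by
    rintro (_ | a) (_ | b) h <;> simp_all [f]
  refine ⟨f ∘ e, hf.comp e.injective, ?_⟩
  rw [EquivLike.range_comp]
  ext (t | d') <;> simp [f, Option.exists, eq_comm (a := d)]

lemma exists_tour_univ_with_gap {T D : Type*} [Fintype T] (d : D) {i j : T} (hij : i ≠ j)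
    {k : ZMod (#(univ : Finset T) + 1)} (hk : k ≠ 0) :
    ∃ c : ZMod (#(univ : Finset T) + 1) → T ⊕ D,
      Injective c ∧ Set.range c = insert (Sum.inr d) (Sum.inl '' (univ : Finset T)) ∧
      ∃ a, c a = Sum.inl i ∧ c (a + k) = Sum.inl j := by
  obtain ⟨c, hc, hrange⟩ := exists_tour d (univ : Finset T)
  obtain ⟨a, ha⟩ : Sum.inl i ∈ Set.range c := by rw [hrange]; simp
  obtain ⟨b, hb⟩ : Sum.inl j ∈ Set.range c := by rw [hrange]; simp
  have hab : a ≠ b := by rintro rfl; exact hij (Sum.inl_injective (ha.symm.trans hb))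
  refine ⟨c ∘ Equiv.swap (a + k) b, hc.comp (Equiv.injective _),
    by rw [EquivLike.range_comp, hrange], a, ?_, by rw [comp_apply, Equiv.swap_apply_left, hb]⟩
  rw [comp_apply, Equiv.swap_apply_of_ne_of_ne (add_ne_left.mpr hk).symm hab, ha]

section Solutions

variable {T D : Type*} [Fintype T] [Fintype D] {clusters : Finset (Finset T)}

lemma exists_sols_visiting_all (hnonempty : ∀ C ∈ clusters, C.Nonempty) (d : D)
    (hn : 3 ≤ Fintype.card T) {i j : T} (hij : i ≠ j) :
    ∃ A B : GMDTSPSol T D clusters, (∀ t, A.y t = 1) ∧ (∀ t, B.y t = 1) ∧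
      A.x (Sum.inl i) (Sum.inl j) = 1 ∧ B.x (Sum.inl i) (Sum.inl j) = 0 := by
  classical
  have hm : 3 < #(univ : Finset T) + 1 := by rw [card_univ]; omega
  have hne : ∀ n : ℕ, 0 < n → n ≤ 3 → (n : ZMod (#(univ : Finset T) + 1)) ≠ 0 :=
    fun n h0 h3 => ZMod.natCast_ne_zero_of_lt h0 (by omega)
  have hcov : ∀ C ∈ clusters, ∃ t ∈ C, t ∈ (univ : Finset T) :=
    fun C hC => (hnonempty C hC).imp fun t ht => ⟨ht, mem_univ t⟩
  obtain ⟨cA, hcA, hrA, a, hiA, hjA⟩ :=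
    exists_tour_univ_with_gap d hij (k := 1) (by exact_mod_cast hne 1 one_pos (by norm_num))
  obtain ⟨cB, hcB, hrB, b, hiB, hjB⟩ :=
    exists_tour_univ_with_gap d hij (k := 2) (by exact_mod_cast hne 2 two_pos (by norm_num))
  refine ⟨tourSol cA hcA (by omega) d univ hrA hcov, tourSol cB hcB (by omega) d univ hrB hcov,
    fun t => if_pos (mem_univ t), fun t => if_pos (mem_univ t), ?_, ?_⟩
  · show cycleMult cA (Sum.inl i) (Sum.inl j) = 1
    rw [← hiA, ← hjA]
    exact cycleMult_apply_succ hcA (by omega) a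
  · show cycleMult cB (Sum.inl i) (Sum.inl j) = 0
    rw [← hiB, ← hjB]
    refine cycleMult_apply_eq_zero hcB (by omega) (fun h => ?_) (fun h => ?_)
    · exact hne 1 one_pos (by norm_num) (by push_cast; linear_combination h)
    · exact hne 3 three_pos le_rfl (by push_cast; linear_combination h)

lemma exists_sol_skipping
    (hdisj : ∀ C ∈ clusters, ∀ C' ∈ clusters, C ≠ C' → Disjoint C C')
    (hnonempty : ∀ C ∈ clusters, C.Nonempty) (d : D) (hn : 3 ≤ Fintype.card T)
    {C : Finset T} (hC : C ∈ clusters) {i j : T} (hi : i ∈ C) (hj : j ∈ C) (hij : i ≠ j) :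
    ∃ sol : GMDTSPSol T D clusters, sol.y j = 0 ∧ ∀ t ≠ j, sol.y t = 1 := by
  classical
  obtain ⟨c, hc, hrange⟩ := exists_tour d (univ.erase j)
  have hm : 2 < #(univ.erase j) + 1 := by rw [card_erase_of_mem (mem_univ j), card_univ]; omega
  have hcov : ∀ C' ∈ clusters, ∃ t ∈ C', t ∈ univ.erase j := by
    intro C' hC'
    by_cases hjC' : j ∈ C'
    · obtain rfl : C' = C := by
        by_contra hne
        exact disjoint_left.mp (hdisj C' hC' C hC hne) hjC' hj
      exact ⟨i, hi, mem_erase.mpr ⟨hij, mem_univ i⟩⟩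
    · obtain ⟨t, ht⟩ := hnonempty C' hC'
      exact ⟨t, ht, mem_erase.mpr ⟨ne_of_mem_of_not_mem ht hjC', mem_univ t⟩⟩
  exact ⟨tourSol c hc hm d _ hrange hcov, if_neg (notMem_erase j univ),
    fun t ht => if_pos (mem_erase.mpr ⟨ht, mem_univ t⟩)⟩

end Solutions

lemma finrank_direction_add_finrank_map_le {K E F : Type*} [Field K] [AddCommGroup E]
    [Module K E] [FiniteDimensional K E] [AddCommGroup F] [Module K F] {s t : Set E}
    (hst : s ⊆ t) (φ : E →ₗ[K] F) {y : F} (hφ : ∀ p ∈ s, φ p = y) :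
    finrank K (affineSpan K s).direction + finrank K ((affineSpan K t).direction.map φ) ≤
      finrank K (affineSpan K t).direction := by
  set V := (affineSpan K t).direction
  have hker : (affineSpan K s).direction ≤ LinearMap.ker φ := by
    rw [direction_affineSpan, vectorSpan_def, Submodule.span_le]
    rintro _ ⟨a, ha, b, hb, rfl⟩
    simp [hφ a ha, hφ b hb]
  have hle : (affineSpan K s).direction ≤ (LinearMap.ker (φ.domRestrict V)).map V.subtype :=
    fun v hv => ⟨⟨v, AffineSubspace.direction_le (affineSpan_mono K hst) hv⟩, hker hv, rfl⟩
  have := (φ.domRestrict V).finrank_range_add_finrank_ker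
  rw [LinearMap.range_domRestrict] at this
  have := Submodule.finrank_mono hle
  rw [Submodule.finrank_map_subtype_eq] at this
  omega

section LinearForms

variable {T D : Type*}

def ySum (C : Finset T) : ((T ⊕ D) → (T ⊕ D) → ℝ) × (T → ℝ) →ₗ[ℝ] ℝ where
  toFun p := ∑ t ∈ C, p.2 t
  map_add' p q := sum_add_distrib
  map_smul' a p := by simp [mul_sum]

def xCoord (u v : T ⊕ D) : ((T ⊕ D) → (T ⊕ D) → ℝ) × (T → ℝ) →ₗ[ℝ] ℝ :=
  LinearMap.proj v ∘ₗ LinearMap.proj u ∘ₗ LinearMap.fst ℝ _ _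

@[simp]
lemma ySum_apply (C : Finset T) (p : ((T ⊕ D) → (T ⊕ D) → ℝ) × (T → ℝ)) :
    ySum C p = ∑ t ∈ C, p.2 t :=
  rfl

@[simp]
lemma xCoord_apply (u v : T ⊕ D) (p : ((T ⊕ D) → (T ⊕ D) → ℝ) × (T → ℝ)) :
    xCoord u v p = p.1 u v :=
  rfl

end LinearForms

section Polytope

variable {T D : Type*} [Fintype T] [Fintype D] {clusters : Finset (Finset T)}

lemma incVec_mem_PF (sol : GMDTSPSol T D clusters) : incVec sol ∈ PF T D clusters ∅ :=
  subset_convexHull ℝ _ ⟨sol, by simp, rfl⟩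

lemma PF_subset_of_convex {K : Set (((T ⊕ D) → (T ⊕ D) → ℝ) × (T → ℝ))}
    (hK : Convex ℝ K)
    (h : ∀ sol : GMDTSPSol T D clusters, incVec sol ∈ K) : PF T D clusters ∅ ⊆ K :=
  convexHull_min (by rintro _ ⟨sol, -, rfl⟩; exact h sol) hK

lemma incVec_sub_mem_direction (s₁ s₂ : GMDTSPSol T D clusters) :
    incVec s₁ - incVec s₂ ∈ (affineSpan ℝ (PF T D clusters ∅)).direction :=
  AffineSubspace.vsub_mem_direction (subset_affineSpan ℝ _ (incVec_mem_PF s₁))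
    (subset_affineSpan ℝ _ (incVec_mem_PF s₂))

lemma GMDTSPSol.x_eq_zero_of_y_eq_zero (sol : GMDTSPSol T D clusters) {t : T}
    (ht : sol.y t = 0) (v : T ⊕ D) : sol.x (Sum.inl t) v = 0 := by
  have hdeg := sol.degree t
  rw [ht, mul_zero, sum_eq_zero_iff] at hdeg
  exact hdeg v (mem_univ v)

lemma GMDTSPSol.x_add_one_le_sum_y (sol : GMDTSPSol T D clusters) {C : Finset T}
    (hC : C ∈ clusters) {i j : T} (hi : i ∈ C) (hj : j ∈ C) (hij : i ≠ j) :
    sol.x (Sum.inl i) (Sum.inl j) + 1 ≤ ∑ t ∈ C, sol.y t := by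
  classical
  rcases Nat.eq_zero_or_pos (sol.x (Sum.inl i) (Sum.inl j)) with h0 | hpos
  · obtain ⟨t, htC, hyt⟩ := sol.covers C hC
    rw [h0, zero_add, ← hyt]
    exact single_le_sum (fun _ _ => Nat.zero_le _) htC
  · have hvisited : ∀ t, sol.y t ≠ 0 → sol.y t = 1 := fun t h =>
      le_antisymm (sol.y_le_one t) (Nat.one_le_iff_ne_zero.mpr h)
    have hyi := hvisited i fun h => hpos.ne' (sol.x_eq_zero_of_y_eq_zero h _)
    have hyj := hvisited j fun h => hpos.ne' (sol.symm _ _ ▸ sol.x_eq_zero_of_y_eq_zero h _)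
    calc sol.x (Sum.inl i) (Sum.inl j) + 1 ≤ sol.y i + sol.y j := by
          have := sol.xTT_le_one i j; omega
      _ = ∑ t ∈ {i, j}, sol.y t := (sum_pair hij).symm
      _ ≤ ∑ t ∈ C, sol.y t :=
          sum_le_sum_of_subset (insert_subset hi (singleton_subset_iff.mpr hj))

lemma xCoord_eq_zero_of_mem_clusterFace {C : Finset T} (hC : C ∈ clusters) {i j : T}
    (hi : i ∈ C) (hj : j ∈ C) (hij : i ≠ j)
    {p : ((T ⊕ D) → (T ⊕ D) → ℝ) × (T → ℝ)}
    (hp : p ∈ PF T D clusters ∅) (hp1 : ∑ t ∈ C, p.2 t = 1) :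
    xCoord (Sum.inl i) (Sum.inl j) p = 0 := by
  set G := xCoord (D := D) (Sum.inl i) (Sum.inl j)
  have h1 := PF_subset_of_convex (convex_halfSpace_ge (ySum C - G).isLinear 1) (fun sol => by
    have := sol.x_add_one_le_sum_y hC hi hj hij
    simp only [Set.mem_ofPred_eq, LinearMap.sub_apply, G, ySum_apply, xCoord_apply, incVec]
    rw [le_sub_iff_add_le']
    exact_mod_cast this) hp
  have h2 := PF_subset_of_convex (convex_halfSpace_ge G.isLinear 0)
    (fun sol => by simp [G, incVec]) hp
  simp only [Set.mem_ofPred_eq, LinearMap.sub_apply, ySum_apply] at h1 h2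
  linarith

end Polytope

section Dimension

variable {T D : Type*} [Fintype T] [Fintype D] [Nonempty D] {clusters : Finset (Finset T)}

lemma dimOf_PF_pos (hnonempty : ∀ C ∈ clusters, C.Nonempty) (hn : 3 ≤ Fintype.card T) :
    0 < dimOf (PF T D clusters ∅) := by
  obtain ⟨d⟩ := ‹Nonempty D›
  obtain ⟨i, j, hij⟩ := Fintype.exists_pair_of_one_lt_card (by omega : 1 < Fintype.card T)
  obtain ⟨A, B, -, -, hxA, hxB⟩ := exists_sols_visiting_all (D := D) hnonempty d hn hij
  have hmem := incVec_sub_mem_direction A B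
  refine Nat.pos_of_ne_zero fun h0 => ?_
  rw [dimOf, Submodule.finrank_eq_zero] at h0
  rw [h0, Submodule.mem_bot, sub_eq_zero] at hmem
  have := congrArg (xCoord (Sum.inl i) (Sum.inl j)) hmem
  simp [incVec, hxA, hxB] at this

lemma dimOf_clusterFace_add_two_le
    (hdisj : ∀ C ∈ clusters, ∀ C' ∈ clusters, C ≠ C' → Disjoint C C')
    (hnonempty : ∀ C ∈ clusters, C.Nonempty) (hn : 3 ≤ Fintype.card T)
    {C : Finset T} (hC : C ∈ clusters) {i j : T} (hi : i ∈ C) (hj : j ∈ C) (hij : i ≠ j) :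
    dimOf {p ∈ PF T D clusters ∅ | ∑ t ∈ C, p.2 t = 1} + 2 ≤
      dimOf (PF T D clusters ∅) := by
  classical
  obtain ⟨d⟩ := ‹Nonempty D›
  obtain ⟨A, B, hyA, hyB, hxA, hxB⟩ := exists_sols_visiting_all (D := D) hnonempty d hn hij
  obtain ⟨S, hySj, hyS⟩ := exists_sol_skipping (D := D) hdisj hnonempty d hn hC hi hj hij
  set G := xCoord (D := D) (Sum.inl i) (Sum.inl j)
  set φ := (ySum C).prod G
  have hface : ∀ p ∈ {p ∈ PF T D clusters ∅ | ∑ t ∈ C, p.2 t = 1}, φ p = (1, 0) :=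
    fun p ⟨hp, hp1⟩ => Prod.ext hp1 (xCoord_eq_zero_of_mem_clusterFace hC hi hj hij hp hp1)
  have hsumS : ∑ t ∈ C, (S.y t : ℝ) = #C - 1 := by
    rw [← add_sum_erase C _ hj, hySj,
      sum_congr rfl fun t ht => by rw [hyS t (ne_of_mem_erase ht)]]
    simp [← card_erase_add_one hj]
  have hmap : ((affineSpan ℝ (PF T D clusters ∅)).direction.map φ) = ⊤ := by
    refine eq_top_iff.mpr fun ⟨a, b⟩ _ =>
      ⟨b • (incVec A - incVec B) - a • (incVec S - incVec B),
        sub_mem (Submodule.smul_mem _ _ (incVec_sub_mem_direction A B))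
          (Submodule.smul_mem _ _ (incVec_sub_mem_direction S B)), ?_⟩
    have hxS : S.x (Sum.inl i) (Sum.inl j) = 0 := S.symm _ _ ▸ S.x_eq_zero_of_y_eq_zero hySj _
    have hφA : φ (incVec A) = ((#C : ℝ), 1) := by simp [φ, G, incVec, hyA, hxA]
    have hφB : φ (incVec B) = ((#C : ℝ), 0) := by simp [φ, G, incVec, hyB, hxB]
    have hφS : φ (incVec S) = ((#C : ℝ) - 1, 0) := by simp [φ, G, incVec, hsumS, hxS]
    simp [hφA, hφB, hφS]
  have := finrank_direction_add_finrank_map_le (Set.sep_subset _ _) φ hface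
  rwa [hmap, finrank_top, finrank_prod, finrank_self] at this

end Dimension

lemma clusterFace_eq_PF_of_singleton {T D : Type*} [Fintype T] [Fintype D]
    {clusters : Finset (Finset T)} {c : T} (hc : {c} ∈ clusters) :
    {p ∈ PF T D clusters ∅ | ∑ t ∈ {c}, p.2 t = 1} = PF T D clusters ∅ :=
  Set.sep_eq_self_iff_mem_true.mpr <| PF_subset_of_convex
    (convex_hyperplane (ySum (D := D) {c}).isLinear 1) fun sol => by
      obtain ⟨t, ht, hyt⟩ := sol.covers {c} hc
      rw [mem_singleton] at ht
      subst ht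
      show ySum {t} (incVec sol) = 1
      simp [incVec, hyt]

theorem cluster_ineq_not_facet_general {T D : Type*} [Fintype T]
    [Fintype D] [Nonempty D] (clusters : Finset (Finset T))
    (hdisj : ∀ C ∈ clusters, ∀ C' ∈ clusters, C ≠ C' → Disjoint C C')
    (hnonempty : ∀ C ∈ clusters, C.Nonempty)
    (hn : 3 ≤ Fintype.card T)
    (C : Finset T) (hC : C ∈ clusters) :
    ¬ IsFacetGe (fun p => ∑ i ∈ C, p.2 i) 1 (PF T D clusters ∅) := by
  rintro ⟨-, hdim⟩
  beta_reduce at hdim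
  obtain ⟨c, rfl⟩ | ⟨i, hi, j, hj, hij⟩ :=
    (hnonempty C hC).exists_eq_singleton_or_nontrivial
  · rw [clusterFace_eq_PF_of_singleton hC] at hdim
    have := dimOf_PF_pos (D := D) hnonempty hn
    omega
  · have := dimOf_clusterFace_add_two_le (D := D) hdisj hnonempty hn hC hi hj hij
    omega

/-- The clustering inequality `Σ_{i∈C_h} y_i ≥ 1` never
defines a facet of the GMDTSP polytope `P = P(∅)`, for any cluster `C_h`. -/
theorem cluster_ineq_not_facet {T D : Type*} [Fintype T] [DecidableEq T]
    [Fintype D] [Nonempty D] (clusters : Finset (Finset T))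
    (hcover : ∀ t : T, ∃ C ∈ clusters, t ∈ C)
    (hdisj : ∀ C ∈ clusters, ∀ C' ∈ clusters, C ≠ C' → Disjoint C C')
    (hnonempty : ∀ C ∈ clusters, C.Nonempty)
    (hn : 3 ≤ Fintype.card T)
    (C : Finset T) (hC : C ∈ clusters) :
    ¬ IsFacetGe (fun p => ∑ i ∈ C, p.2 i) 1 (PF T D clusters ∅) :=
  cluster_ineq_not_facet_general clusters hdisj hnonempty hn C hC
end
end

section
/- For a comb C = (H, 𝒯₁, …, 𝒯_t) with handle H ⊆ T and an odd number t ≥ 3 of pairwise disjoint teeth 𝒯_i ⊆ T, each intersecting H and not contained in H, the comb inequality x(γ(H)) + Σ_{i=1}^{t} x(γ(𝒯_i)) ≤ |H| + Σ_{i=1}^{t}|𝒯_i| − (3t+1)/2 is valid for every feasible GMDTSP solution that visits all targets of H ∪ 𝒯₁ ∪ … ∪ 𝒯_t. -/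
open Finset

/-- `x(γ(S))`: total multiplicity of solution edges with both endpoints in the
target set `S` (each edge counted once, via ordered pairs `a < b`). -/
def xGamma {T D : Type*} [Fintype T] [LinearOrder T] [Fintype D]
    {clusters : Finset (Finset T)} (sol : GMDTSPSol T D clusters)
    (S : Finset T) : ℕ :=
  ∑ a ∈ S, ∑ b ∈ S.filter (a < ·), sol.x (Sum.inl a) (Sum.inl b)

/-!
Every visited target set `S` satisfies the degree identity `2 x(γ(S)) + x(δ(S)) = 2|S|`, so the
comb inequality is equivalent to `x(δ(H)) + Σ_i x(δ(𝒯_i)) ≥ 3t + 1`. Cuts are even, and a cut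
around a visited target is nonzero because that target is joined to a depot outside `S`; hence
every such cut is at least 2. Splitting a tooth into `𝒯_i ∩ H` and `𝒯_i \ H` gives
`x(δ(𝒯_i)) + x(𝒯_i ∩ H : 𝒯_i \ H) ≥ 3`, and the edges between the two halves of the teeth all
cross `δ(H)`. Summing yields `3t`, and parity turns this into `3t + 1`.
-/

open Function

theorem Finset.sum_sum_eq_two_nsmul_sum_sum_lt {α M : Type*} [LinearOrder α] [AddCommMonoid M]
    (s : Finset α) (f : α → α → M) (hsymm : ∀ a b, f a b = f b a) (hdiag : ∀ a, f a a = 0) :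
    ∑ a ∈ s, ∑ b ∈ s, f a b = 2 • ∑ a ∈ s, ∑ b ∈ s with a < b, f a b := by
  have hle : ∀ a ∈ s, ∑ b ∈ s with ¬ a < b, f a b = ∑ b ∈ s with b < a, f a b := by
    intro a _
    refine (sum_subset (fun b hb => ?_) fun b hb hb' => ?_).symm
    · simp only [mem_filter] at hb ⊢
      exact ⟨hb.1, not_lt.2 hb.2.le⟩
    · simp only [mem_filter, not_lt, not_and] at hb hb'
      rw [le_antisymm hb.2 (hb' hb.1), hdiag]
  have hgt : ∑ a ∈ s, ∑ b ∈ s with b < a, f a b = ∑ a ∈ s, ∑ b ∈ s with a < b, f a b := by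
    rw [sum_comm' (t := fun a => s.filter (· < a)) (t' := s) (s' := fun b => s.filter (b < ·))
      fun a b => ?_]
    · exact sum_congr rfl fun a _ => sum_congr rfl fun b _ => hsymm b a
    · simp only [mem_filter]
      tauto
  rw [← sum_congr rfl fun a _ => sum_filter_add_sum_filter_not s (a < ·) (f a), sum_add_distrib,
    sum_congr rfl hle, hgt, two_nsmul]

namespace GMDTSPSol

variable {T D : Type*} [Fintype T] [Fintype D] {clusters : Finset (Finset T)}
  (sol : GMDTSPSol T D clusters)

/-- `x(A : B)`, counting ordered pairs, so that `x(S : S) = 2 x(γ(S))`. -/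
def xBetween (A B : Finset T) : ℕ :=
  ∑ a ∈ A, ∑ b ∈ B, sol.x (.inl a) (.inl b)

theorem xBetween_comm (A B : Finset T) : sol.xBetween A B = sol.xBetween B A := by
  rw [xBetween, sum_comm]
  exact sum_congr rfl fun _ _ => sum_congr rfl fun _ _ => sol.symm _ _

theorem xBetween_mono {A A' B B' : Finset T} (hA : A ⊆ A') (hB : B ⊆ B') :
    sol.xBetween A B ≤ sol.xBetween A' B' :=
  (sum_le_sum fun _ _ => sum_le_sum_of_subset hB).trans (sum_le_sum_of_subset hA)

section DecidableEq

variable [DecidableEq T]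

theorem xBetween_union_left {A A' : Finset T} (h : Disjoint A A') (B : Finset T) :
    sol.xBetween (A ∪ A') B = sol.xBetween A B + sol.xBetween A' B :=
  sum_union h

theorem xBetween_union_right (A : Finset T) {B B' : Finset T} (h : Disjoint B B') :
    sol.xBetween A (B ∪ B') = sol.xBetween A B + sol.xBetween A B' := by
  rw [xBetween_comm, xBetween_union_left _ h, xBetween_comm, xBetween_comm sol B']

theorem cutS_eq (S : Finset T) :
    cutS sol S = sol.xBetween S Sᶜ + ∑ a ∈ S, ∑ d, sol.x (.inl a) (.inr d) :=
  sum_add_distrib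

theorem xBetween_compl_le_cutS (S : Finset T) : sol.xBetween S Sᶜ ≤ cutS sol S :=
  (cutS_eq sol S).symm ▸ Nat.le_add_right _ _

theorem cutS_add_cutS {A B : Finset T} (h : Disjoint A B) :
    cutS sol A + cutS sol B = cutS sol (A ∪ B) + 2 * sol.xBetween A B := by
  have hA : Aᶜ = (A ∪ B)ᶜ ∪ B := by
    ext x; have := @disjoint_left.1 h x; simp only [mem_compl, mem_union]; tauto
  have hB : Bᶜ = (A ∪ B)ᶜ ∪ A := by
    ext x; have := @disjoint_left.1 h x; simp only [mem_compl, mem_union]; tauto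
  have hAc : Disjoint (A ∪ B)ᶜ B := disjoint_compl_left.mono_right subset_union_right
  have hBc : Disjoint (A ∪ B)ᶜ A := disjoint_compl_left.mono_right subset_union_left
  simp only [cutS_eq, sum_union h, xBetween_union_left sol h]
  rw [hA, hB, xBetween_union_right _ _ hAc, xBetween_union_right _ _ hBc, xBetween_comm sol B A]
  ring

theorem x_le_cutS {S : Finset T} {a : T} (ha : a ∈ S) {v : T ⊕ D} (hv : ∀ b ∈ S, v ≠ .inl b) :
    sol.x (.inl a) v ≤ cutS sol S := by
  refine le_trans ?_ (single_le_sum (fun _ _ => Nat.zero_le _) ha)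
  rcases v with b | d
  · have hb : b ∈ Sᶜ := mem_compl.2 fun hb => hv b hb rfl
    exact (single_le_sum (f := fun b => sol.x (.inl a) (.inl b)) (fun _ _ => Nat.zero_le _)
      hb).trans (Nat.le_add_right _ _)
  · exact (single_le_sum (f := fun d => sol.x (.inl a) (.inr d)) (fun _ _ => Nat.zero_le _)
      (mem_univ d)).trans (Nat.le_add_left _ _)

/-- A visited target reaches a depot, and a walk from `S` to a depot has to leave `S`. -/
theorem cutS_pos {S : Finset T} {v : T} (hv : v ∈ S) (hy : sol.y v = 1) : 0 < cutS sol S := by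
  by_contra! h0
  obtain ⟨d, hd⟩ := sol.connected v hy
  have hstay : ∀ u, Relation.ReflTransGen (fun u v => 0 < sol.x u v) (.inl v) u →
      ∃ a ∈ S, u = .inl a := by
    intro u hu
    induction hu with
    | refl => exact ⟨v, hv, rfl⟩
    | tail _ hstep ih =>
      obtain ⟨a, ha, rfl⟩ := ih
      by_contra! hout
      have := sol.x_le_cutS ha hout
      omega
  obtain ⟨a, _, hda⟩ := hstay _ hd
  exact Sum.inr_ne_inl hda

theorem sum_xBetween_le_cutS {ι : Type*} [Fintype ι] {H : Finset T} {A B : ι → Finset T}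
    (hA : ∀ i, A i ⊆ H) (hB : ∀ i, Disjoint (B i) H) (hdisj : Pairwise (Disjoint on A)) :
    ∑ i, sol.xBetween (A i) (B i) ≤ cutS sol H := by
  classical
  calc ∑ i, sol.xBetween (A i) (B i)
      ≤ ∑ i, sol.xBetween (A i) Hᶜ :=
        sum_le_sum fun i _ => sol.xBetween_mono subset_rfl fun _ hb =>
          mem_compl.2 (disjoint_left.1 (hB i) hb)
    _ = sol.xBetween (univ.biUnion A) Hᶜ :=
        (sum_biUnion (hdisj.set_pairwise _)).symm
    _ ≤ sol.xBetween H Hᶜ := sol.xBetween_mono (biUnion_subset.2 fun i _ => hA i) subset_rfl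
    _ ≤ cutS sol H := sol.xBetween_compl_le_cutS H

end DecidableEq

section LinearOrder

variable [LinearOrder T]

theorem xBetween_self (S : Finset T) : sol.xBetween S S = 2 * xGamma sol S := by
  rw [xBetween, sum_sum_eq_two_nsmul_sum_sum_lt _ _ (fun _ _ => sol.symm _ _)
    (fun _ => sol.loopless _), smul_eq_mul, xGamma]

theorem two_mul_xGamma_add_cutS (S : Finset T) :
    2 * xGamma sol S + cutS sol S = 2 * ∑ a ∈ S, sol.y a := by
  rw [← xBetween_self, xBetween, cutS, ← sum_add_distrib, mul_sum]
  refine sum_congr rfl fun a _ => ?_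
  rw [← sol.degree, Fintype.sum_sum_type, ← sum_add_sum_compl S]
  ring

theorem two_mul_xGamma_add_cutS_of_visited {S : Finset T} (hvis : ∀ a ∈ S, sol.y a = 1) :
    2 * xGamma sol S + cutS sol S = 2 * S.card := by
  rw [two_mul_xGamma_add_cutS, sum_congr rfl hvis, sum_const, smul_eq_mul, mul_one]

theorem even_cutS (S : Finset T) : Even (cutS sol S) :=
  ⟨∑ a ∈ S, sol.y a - xGamma sol S, by have := sol.two_mul_xGamma_add_cutS S; omega⟩

theorem two_le_cutS {S : Finset T} {v : T} (hv : v ∈ S) (hy : sol.y v = 1) :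
    2 ≤ cutS sol S := by
  obtain ⟨k, hk⟩ := sol.even_cutS S
  have := sol.cutS_pos hv hy
  omega

/-- `x(δ(S ∩ H)) + x(δ(S \ H)) = x(δ(S)) + 2 x(S ∩ H : S \ H)`, and all three cuts are
at least 2. -/
theorem three_le_cutS_add_xBetween {S H : Finset T} (hvis : ∀ a ∈ S, sol.y a = 1)
    (hin : (S ∩ H).Nonempty) (hout : (S \ H).Nonempty) :
    3 ≤ cutS sol S + sol.xBetween (S ∩ H) (S \ H) := by
  obtain ⟨u, hu⟩ := hin
  obtain ⟨w, hw⟩ := hout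
  have hsplit := sol.cutS_add_cutS (disjoint_sdiff_inter S H).symm
  rw [union_comm, sdiff_union_inter] at hsplit
  have hyu := hvis u (mem_of_mem_inter_left hu)
  have hcutIn := sol.two_le_cutS hu hyu
  have hcutOut := sol.two_le_cutS hw (hvis w (mem_sdiff.1 hw).1)
  have hcutS := sol.two_le_cutS (mem_of_mem_inter_left hu) hyu
  omega

theorem comb_cutS_bound {ι : Type*} [Fintype ι] (hodd : Odd (Fintype.card ι))
    (H : Finset T) (𝒯 : ι → Finset T) (hHT : ∀ i, (H ∩ 𝒯 i).Nonempty)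
    (hTH : ∀ i, (𝒯 i \ H).Nonempty) (hdisj : Pairwise (Disjoint on 𝒯))
    (hvis : ∀ i, ∀ a ∈ 𝒯 i, sol.y a = 1) :
    3 * Fintype.card ι + 1 ≤ cutS sol H + ∑ i, cutS sol (𝒯 i) := by
  have hteeth : 3 * Fintype.card ι ≤
      ∑ i, cutS sol (𝒯 i) + ∑ i, sol.xBetween (𝒯 i ∩ H) (𝒯 i \ H) := by
    rw [← sum_add_distrib]
    simpa [mul_comm] using sum_le_sum fun i (_ : i ∈ univ) =>
      sol.three_le_cutS_add_xBetween (hvis i) (inter_comm H (𝒯 i) ▸ hHT i) (hTH i)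
  have hhandle : ∑ i, sol.xBetween (𝒯 i ∩ H) (𝒯 i \ H) ≤ cutS sol H :=
    sol.sum_xBetween_le_cutS (fun _ => inter_subset_right) (fun _ => sdiff_disjoint)
      fun i j hij => (hdisj hij).mono inter_subset_left inter_subset_left
  obtain ⟨k, hk⟩ := hodd
  obtain ⟨m, hm⟩ :=
    (sol.even_cutS H).add (even_sum (s := univ) _ fun i _ => sol.even_cutS (𝒯 i))
  omega

end LinearOrder

end GMDTSPSol

theorem comb_valid_general {T D : Type*} [Fintype T] [LinearOrder T] [Fintype D]
    (clusters : Finset (Finset T)) (sol : GMDTSPSol T D clusters)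
    (t : ℕ) (htodd : Odd t)
    (H : Finset T) (𝒯 : Fin t → Finset T)
    (hHT : ∀ i, (H ∩ 𝒯 i).Nonempty)
    (hTH : ∀ i, (𝒯 i \ H).Nonempty)
    (hdisj : ∀ i j, i ≠ j → Disjoint (𝒯 i) (𝒯 j))
    (hvisit : ∀ v : T, (v ∈ H ∨ ∃ i, v ∈ 𝒯 i) → sol.y v = 1) :
    (xGamma sol H : ℤ) + ∑ i, (xGamma sol (𝒯 i) : ℤ) ≤
      (H.card : ℤ) + (∑ i, ((𝒯 i).card : ℤ)) - (3 * t + 1) / 2 := by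
  have hvisT : ∀ i, ∀ a ∈ 𝒯 i, sol.y a = 1 := fun i a ha => hvisit a (.inr ⟨i, ha⟩)
  have hcut := sol.comb_cutS_bound (by simpa using htodd) H 𝒯 hHT hTH
    (fun i j => hdisj i j) hvisT
  have hdegH := sol.two_mul_xGamma_add_cutS_of_visited fun a ha => hvisit a (.inl ha)
  have hdegT : 2 * ∑ i, xGamma sol (𝒯 i) + ∑ i, cutS sol (𝒯 i) = 2 * ∑ i, (𝒯 i).card := by
    simp only [mul_sum, ← sum_add_distrib, sol.two_mul_xGamma_add_cutS_of_visited (hvisT _)]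
  rw [Fintype.card_fin] at hcut
  push_cast [← Nat.cast_sum]
  omega

/-- For a comb with handle `H ⊆ T` and an odd number `t ≥ 3`
of pairwise disjoint teeth `𝒯_i ⊆ T`, each meeting `H` and not contained in
`H`, the comb inequality
`x(γ(H)) + Σ_i x(γ(𝒯_i)) ≤ |H| + Σ_i |𝒯_i| − (3t+1)/2`
is valid for every feasible GMDTSP solution visiting all targets of
`H ∪ 𝒯₁ ∪ … ∪ 𝒯_t`. -/
theorem comb_valid {T D : Type*} [Fintype T] [LinearOrder T] [Fintype D]
    (clusters : Finset (Finset T)) (sol : GMDTSPSol T D clusters)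
    (t : ℕ) (htodd : Odd t) (ht : 3 ≤ t)
    (H : Finset T) (𝒯 : Fin t → Finset T)
    (hHT : ∀ i, (H ∩ 𝒯 i).Nonempty)
    (hTH : ∀ i, (𝒯 i \ H).Nonempty)
    (hdisj : ∀ i j, i ≠ j → Disjoint (𝒯 i) (𝒯 j))
    (hvisit : ∀ v : T, (v ∈ H ∨ ∃ i, v ∈ 𝒯 i) → sol.y v = 1) :
    (xGamma sol H : ℤ) + ∑ i, (xGamma sol (𝒯 i) : ℤ) ≤
      (H.card : ℤ) + (∑ i, ((𝒯 i).card : ℤ)) - (3 * t + 1) / 2 :=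
  comb_valid_general clusters sol t htodd H 𝒯 hHT hTH hdisj hvisit
end

section
/- For a T-comb with handle H ⊂ T and t ≥ 2 pairwise disjoint two-element teeth 𝒯₁,…,𝒯_t, each consisting of one depot and one target of H, with |H ∖ ∪_i 𝒯_i| = 1 and some depot outside all teeth, the inequality x(γ(H)) + Σ_{i=1}^{t} x(γ(𝒯_i)) ≤ Σ_{i=1}^{t} Σ_{v ∈ H∩𝒯_i} 2·y_v is valid for every feasible GMDTSP solution. -/
open Finset

/-- For a T-comb with handle `H ⊂ T` and `t ≥ 2` pairwise
disjoint two-element teeth `𝒯_i = {d_i, a_i}`, each consisting of a depot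
`d_i` and a target `a_i ∈ H`, with `|H ∖ ∪_i 𝒯_i| = 1` and some depot outside
all teeth, the inequality
`x(γ(H)) + Σ_i x(γ(𝒯_i)) ≤ Σ_i Σ_{v∈H∩𝒯_i} 2·y_v`
is valid for every feasible GMDTSP solution. -/
theorem tcomb_valid {T D : Type*} [Fintype T] [LinearOrder T] [Fintype D]
    [DecidableEq D] (clusters : Finset (Finset T))
    (sol : GMDTSPSol T D clusters)
    (t : ℕ) (ht : 2 ≤ t)
    (H : Finset T) (hH : H ≠ Finset.univ)
    (d : Fin t → D) (hd : Function.Injective d)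
    (a : Fin t → T) (ha : Function.Injective a)
    (haH : ∀ i, a i ∈ H)
    (hHrem : (H \ Finset.univ.image a).card = 1)
    (hd0 : ∃ d₀ : D, ∀ i, d₀ ≠ d i) :
    xGamma sol H + ∑ i, sol.x (Sum.inr (d i)) (Sum.inl (a i)) ≤
      ∑ i, 2 * sol.y (a i) := by
  classical
  set A : Finset T := Finset.univ.image a with hA
  have hAH : A ⊆ H := by
    intro u hu
    simp only [hA, Finset.mem_image] at hu
    obtain ⟨i, _, rfl⟩ := hu
    exact haH i
  -- per-tooth bound
  have key1 : ∀ i, sol.x (Sum.inr (d i)) (Sum.inl (a i)) +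
      ∑ b ∈ H, sol.x (Sum.inl (a i)) (Sum.inl b) ≤ 2 * sol.y (a i) := by
    intro i
    rw [← sol.degree (a i), Fintype.sum_sum_type, add_comm]
    refine add_le_add ?_ ?_
    · exact Finset.sum_le_sum_of_subset (Finset.subset_univ H)
    · rw [sol.symm]
      exact Finset.single_le_sum (f := fun d' => sol.x (Sum.inl (a i)) (Sum.inr d'))
        (fun _ _ => Nat.zero_le _) (Finset.mem_univ (d i))
  have main : xGamma sol H ≤ ∑ i, ∑ b ∈ H, sol.x (Sum.inl (a i)) (Sum.inl b) := by
    have himg : ∑ i, ∑ b ∈ H, sol.x (Sum.inl (a i)) (Sum.inl b)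
        = ∑ u ∈ A, ∑ b ∈ H, sol.x (Sum.inl u) (Sum.inl b) := by
      rw [hA, Finset.sum_image (fun i _ j _ h => ha h)]
    rw [himg]
    have hsplit : ∑ u ∈ A, ∑ b ∈ H, sol.x (Sum.inl u) (Sum.inl b)
        = (∑ u ∈ A, ∑ b ∈ H.filter (u < ·), sol.x (Sum.inl u) (Sum.inl b))
          + ∑ u ∈ A, ∑ b ∈ H.filter (fun b => ¬ u < b), sol.x (Sum.inl u) (Sum.inl b) := by
      rw [← Finset.sum_add_distrib]
      refine Finset.sum_congr rfl fun u _ => ?_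
      exact (Finset.sum_filter_add_sum_filter_not H _ _).symm
    rw [hsplit]
    have hHdecomp : xGamma sol H
        = (∑ u ∈ H \ A, ∑ b ∈ H.filter (u < ·), sol.x (Sum.inl u) (Sum.inl b))
          + ∑ u ∈ A, ∑ b ∈ H.filter (u < ·), sol.x (Sum.inl u) (Sum.inl b) := by
      rw [xGamma, ← Finset.sum_sdiff hAH]
    rw [hHdecomp, add_comm]
    refine add_le_add le_rfl ?_
    -- bound the w-part
    obtain ⟨w, hw⟩ := Finset.card_eq_one.mp hHrem
    calc ∑ u ∈ H \ A, ∑ b ∈ H.filter (u < ·), sol.x (Sum.inl u) (Sum.inl b)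
        ≤ ∑ u ∈ H \ A, ∑ b ∈ A.filter (u < ·), sol.x (Sum.inl u) (Sum.inl b) := by
          refine Finset.sum_le_sum fun u hu => ?_
          refine Finset.sum_le_sum_of_subset fun b hb => ?_
          simp only [Finset.mem_filter] at hb ⊢
          refine ⟨?_, hb.2⟩
          by_contra hbA
          have : b ∈ H \ A := Finset.mem_sdiff.mpr ⟨hb.1, hbA⟩
          rw [hw, Finset.mem_singleton] at this hu
          exact absurd hb.2 (by rw [hu, this]; exact lt_irrefl w)
      _ = ∑ u ∈ A, ∑ b ∈ (H \ A).filter (· < u), sol.x (Sum.inl u) (Sum.inl b) := by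
          simp only [Finset.sum_filter]
          rw [Finset.sum_comm]
          refine Finset.sum_congr rfl fun u _ => Finset.sum_congr rfl fun b _ => ?_
          rw [sol.symm]
      _ ≤ ∑ u ∈ A, ∑ b ∈ H.filter (fun b => ¬ u < b), sol.x (Sum.inl u) (Sum.inl b) := by
          refine Finset.sum_le_sum fun u _ => ?_
          refine Finset.sum_le_sum_of_subset fun b hb => ?_
          simp only [Finset.mem_filter, Finset.mem_sdiff] at hb ⊢
          exact ⟨hb.1.1, not_lt_of_gt hb.2⟩
  calc xGamma sol H + ∑ i, sol.x (Sum.inr (d i)) (Sum.inl (a i))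
      ≤ (∑ i, ∑ b ∈ H, sol.x (Sum.inl (a i)) (Sum.inl b))
        + ∑ i, sol.x (Sum.inr (d i)) (Sum.inl (a i)) := add_le_add main le_rfl
    _ = ∑ i, (sol.x (Sum.inr (d i)) (Sum.inl (a i))
        + ∑ b ∈ H, sol.x (Sum.inl (a i)) (Sum.inl b)) := by
          rw [Finset.sum_add_distrib, add_comm]
    _ ≤ ∑ i, 2 * sol.y (a i) := Finset.sum_le_sum fun i _ => key1 i
end
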